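/- (Compatibility of the Satake and Bernstein isomorphisms) If h ∈ H_K, r ∈ R^W and z ∈ Z(H) correspond to one another under the Satake isomorphism H_K ≅ R^W and the Bernstein isomorphism R^W ≅ Z(H), then h = e_K z, where e_K = 1_K / meas(K). -/
import Mathlib


/-!
**Statement 10 (Compatibility of the Satake and Bernstein isomorphisms).**
If `h ∈ H_K`, `r ∈ R^W` and `z ∈ Z(H)` correspond to one another under the Satake
isomorphism `H_K ≅ R^W` and the Bernstein isomorphism `R^W ≅ Z(H)`, then `h = e_K z`,
where `e_K = 1_K / meas(K)`.

Axiomatized setting: `H` is the Iwahori–Hecke algebra, `e_K ∈ H` the idempotent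
`1_K/meas(K)`, and `H_K` is identified with the subalgebra `e_K H e_K` (the condition
`e_K h e_K = h`).  `R = AddMonoidAlgebra ℂ X` with `W`-action; `θ : R → H` is the
Bernstein embedding, whose restriction to `R^W` is the Bernstein isomorphism onto
`Z(H)` (hypothesis `hBernstein`); `M` is the universal principal series module, a
right `H`-module and left `R`-module, free of rank one over `H` with generator `v₁`
(`hfreeH`), with `v₁ θ(r) = r · v₁` (`hv1`).  The Satake correspondence `h ↔ r` is
the characterization `m ∗ h = r · m` for every `m ∈ M_K = M e_K` (hypothesis `hSatake`).
-/

open MulOpposite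

theorem stmt10
    (X : Type) [AddCommGroup X]
    (W : Type) [Group W] [DistribMulAction W X]
    [MulSemiringAction W (AddMonoidAlgebra ℂ X)]
    (hactR : ∀ (w : W) (μ : X),
      w • (AddMonoidAlgebra.single μ (1 : ℂ)) = AddMonoidAlgebra.single (w • μ) 1)
    (H : Type) [Ring H] [Algebra ℂ H]
    (θ : AddMonoidAlgebra ℂ X →ₐ[ℂ] H)
    -- the Bernstein isomorphism R^W ≅ Z(H):
    (hBernstein : ∀ h : H, h ∈ Set.center H ↔
      ∃ r : AddMonoidAlgebra ℂ X, (∀ w : W, w • r = r) ∧ θ r = h)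
    (M : Type) [AddCommGroup M] [Module ℂ M] [Module Hᵐᵒᵖ M]
    [Module (AddMonoidAlgebra ℂ X) M]
    [SMulCommClass (AddMonoidAlgebra ℂ X) Hᵐᵒᵖ M]
    (v₁ : M)
    (hfreeH : Function.Injective fun h : H => op h • v₁)
    (hv1 : ∀ r : AddMonoidAlgebra ℂ X, op (θ r) • v₁ = r • v₁)
    (eK : H) (hidem : eK * eK = eK)
    -- elements corresponding to one another under the Satake and Bernstein isomorphisms:
    (h : H) (r : AddMonoidAlgebra ℂ X) (z : H)
    (hHK : eK * h * eK = h)                       -- h ∈ H_K = e_K H e_K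
    (hrW : ∀ w : W, w • r = r)                    -- r ∈ R^W
    (hz : z ∈ Set.center H)                       -- z ∈ Z(H)
    (hBern : θ r = z)                             -- r ↔ z under Bernstein
    (hSatake : ∀ m : M, op eK • m = m → op h • m = r • m)  -- h ↔ r under Satake
    : h = eK * z := by
  have hm : op eK • (op eK • v₁) = op eK • v₁ := by
    rw [← mul_smul, ← op_mul, hidem]
  have key : op h • (op eK • v₁) = r • (op eK • v₁) := hSatake _ hm
  rw [← mul_smul, ← op_mul, smul_comm, ← hv1, ← mul_smul, ← op_mul, hBern] at key
  have h1 : eK * h = z * eK := hfreeH key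
  have hzc := (Set.mem_center_iff.mp hz).1 eK
  calc h = eK * h * eK := hHK.symm
    _ = z * eK * eK := by rw [h1]
    _ = z * eK := by rw [mul_assoc, hidem]
    _ = eK * z := hzc
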